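/- arXiv:1105.4122 — 3 statements merged into one kernel-verified Lean document; each statement's English description precedes it below -/
import Mathlib

section
/- Let Y be a Tychonoff space and X ⊆ Y a subspace. There exists a continuous compact-valued retraction r : Y → X (i.e. a continuous set-valued map whose values are nonempty compact subsets of X with r(x) = {x} for all x ∈ X) if and only if there exists an extender u : C*(X) → C*(Y) with compact supports which is normed, weakly additive, preserves min and weakly preserves max, and also if and only if there exists an extender u : C*(X) → C*(Y) with compact supports which is normed, weakly additive, preserves max and weakly preserves min. -/
/-!
Given a continuous compact-valued retraction `r`, the extender is `u f y := min f(r y)`; lower and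
upper semicontinuity of `r` are exactly what makes `y ↦ min f(r y)` continuous.

Conversely, for a functional `μ` in `R_min(X)` let `A(μ) ⊆ βX` be the closed set of points `p`
with `μ f ≤ βf(p)` for all `f`. The sets `{μ f ≤ βf}` are directed because `μ` preserves min,
and each of them meets `{βf₀ ≤ μ f₀}` by a compactness argument on `βX` that uses weak
preservation of max; hence `μ f = min βf(A(μ))`. Compact supports force `A(μ_y) ⊆ X`, so
`r y := A(μ_y)` is a compact-valued retraction, and its semicontinuity follows from the continuity
of `y ↦ u f y = min βf(A(μ_y))` via Urysohn functions on `βX`.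

Conjugation `u ↦ (f ↦ -u(-f))` exchanges the min and the max versions.
-/

open Set

/-- The Čech–Stone extension `βf : βX → ℝ` of a bounded continuous function `f : X → ℝ`
(obtained by extending `f`, viewed as a map into the compact interval `[-‖f‖, ‖f‖]`,
over the Stone–Čech compactification). -/
noncomputable def betaExt {X : Type*} [TopologicalSpace X] (f : BoundedContinuousFunction X ℝ) :
    StoneCech X → ℝ :=
  Subtype.val ∘ stoneCechExtend
    (Continuous.subtype_mk f.continuous
      (fun x => Set.mem_Icc.mpr (abs_le.mp (Real.norm_eq_abs (f x) ▸ f.norm_coe_le_norm x)))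
      : Continuous fun x => (⟨f x, _⟩ : Set.Icc (-‖f‖) ‖f‖))

variable {X : Type*} [TopologicalSpace X]

/-- `μ` is *normed*: `μ 1 = 1`. -/
def BNormed (μ : BoundedContinuousFunction X ℝ → ℝ) : Prop := μ 1 = 1

/-- `μ` is *weakly additive*: `μ (f + c·1) = μ f + c`. -/
def BWeaklyAdditive (μ : BoundedContinuousFunction X ℝ → ℝ) : Prop :=
  ∀ (f : BoundedContinuousFunction X ℝ) (c : ℝ),
    μ (f + BoundedContinuousFunction.const X c) = μ f + c

/-- `μ` *preserves min*. -/
def BPreservesMin (μ : BoundedContinuousFunction X ℝ → ℝ) : Prop :=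
  ∀ f g : BoundedContinuousFunction X ℝ, μ (f ⊓ g) = min (μ f) (μ g)

/-- `μ` *preserves max*. -/
def BPreservesMax (μ : BoundedContinuousFunction X ℝ → ℝ) : Prop :=
  ∀ f g : BoundedContinuousFunction X ℝ, μ (f ⊔ g) = max (μ f) (μ g)

/-- `μ` *weakly preserves min*: `μ (min{f, c·1}) = min{μ f, c}`. -/
def BWeaklyPreservesMin (μ : BoundedContinuousFunction X ℝ → ℝ) : Prop :=
  ∀ (f : BoundedContinuousFunction X ℝ) (c : ℝ),
    μ (f ⊓ BoundedContinuousFunction.const X c) = min (μ f) c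

/-- `μ` *weakly preserves max*: `μ (max{f, c·1}) = max{μ f, c}`. -/
def BWeaklyPreservesMax (μ : BoundedContinuousFunction X ℝ → ℝ) : Prop :=
  ∀ (f : BoundedContinuousFunction X ℝ) (c : ℝ),
    μ (f ⊔ BoundedContinuousFunction.const X c) = max (μ f) c

/-- The support `S(μ) ⊆ βX` of a functional `μ` on `C*(X)`: points `p ∈ βX` such that every
open neighbourhood `O` of `p` admits `f, g ∈ C*(X)` with `βf = βg` off `O` and `μ f ≠ μ g`. -/
def betaSupport (μ : BoundedContinuousFunction X ℝ → ℝ) : Set (StoneCech X) :=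
  {p | ∀ O : Set (StoneCech X), IsOpen O → p ∈ O →
    ∃ f g : BoundedContinuousFunction X ℝ,
      (∀ q ∉ O, betaExt f q = betaExt g q) ∧ μ f ≠ μ g}

/-- `R_min(X)`: normed, weakly additive functionals preserving min and weakly preserving max. -/
def RMin (X : Type*) [TopologicalSpace X] : Set (BoundedContinuousFunction X ℝ → ℝ) :=
  {μ | BNormed μ ∧ BWeaklyAdditive μ ∧ BPreservesMin μ ∧ BWeaklyPreservesMax μ}

/-- `R_max(X)`: normed, weakly additive functionals preserving max and weakly preserving min. -/
def RMax (X : Type*) [TopologicalSpace X] : Set (BoundedContinuousFunction X ℝ → ℝ) :=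
  {μ | BNormed μ ∧ BWeaklyAdditive μ ∧ BPreservesMax μ ∧ BWeaklyPreservesMin μ}

/-- `R_min(X)_c`: members of `R_min(X)` with compact support, i.e. `∅ ≠ S(μ) ⊆ η(X)`. -/
def RMinC (X : Type*) [TopologicalSpace X] : Set (BoundedContinuousFunction X ℝ → ℝ) :=
  {μ | μ ∈ RMin X ∧ (betaSupport μ).Nonempty ∧
    betaSupport μ ⊆ Set.range (stoneCechUnit : X → StoneCech X)}

/-- `R_max(X)_c`: members of `R_max(X)` with compact support, i.e. `∅ ≠ S(μ) ⊆ η(X)`. -/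
def RMaxC (X : Type*) [TopologicalSpace X] : Set (BoundedContinuousFunction X ℝ → ℝ) :=
  {μ | μ ∈ RMax X ∧ (betaSupport μ).Nonempty ∧
    betaSupport μ ⊆ Set.range (stoneCechUnit : X → StoneCech X)}

open scoped BoundedContinuousFunction
open BoundedContinuousFunction Topology

lemma IsLeast.min_image {α β : Type*} [LinearOrder β] {s : Set α} {f g : α → β} {a b : β}
    (hf : IsLeast (f '' s) a) (hg : IsLeast (g '' s) b) :
    IsLeast ((fun x => min (f x) (g x)) '' s) (min a b) := by
  refine ⟨?_, ?_⟩
  · rcases le_total a b with hab | hab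
    · obtain ⟨x, hx, rfl⟩ := hf.1
      exact ⟨x, hx, (min_eq_left (hab.trans (hg.2 (mem_image_of_mem g hx)))).trans
        (min_eq_left hab).symm⟩
    · obtain ⟨x, hx, rfl⟩ := hg.1
      exact ⟨x, hx, (min_eq_right (hab.trans (hf.2 (mem_image_of_mem f hx)))).trans
        (min_eq_right hab).symm⟩
  · rintro _ ⟨x, hx, rfl⟩
    exact min_le_min (hf.2 (mem_image_of_mem f hx)) (hg.2 (mem_image_of_mem g hx))

lemma IsCompact.isLeast_sInf_image {α : Type*} [TopologicalSpace α] {K : Set α} (hK : IsCompact K)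
    (hne : K.Nonempty) {f : α → ℝ} (hf : Continuous f) : IsLeast (f '' K) (sInf (f '' K)) :=
  (hK.image hf).isLeast_sInf (hne.image f)

@[fun_prop]
lemma continuous_betaExt (f : X →ᵇ ℝ) : Continuous (betaExt f) :=
  continuous_subtype_val.comp (continuous_stoneCechExtend _)

@[simp]
lemma betaExt_stoneCechUnit (f : X →ᵇ ℝ) (x : X) : betaExt f (stoneCechUnit x) = f x :=
  congrArg Subtype.val (congrFun (stoneCechExtend_extends _) x)

lemma betaExt_eq_of_comp_eq {f : X →ᵇ ℝ} {h : StoneCech X → ℝ} (hh : Continuous h)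
    (hf : ∀ x, h (stoneCechUnit x) = f x) : betaExt f = h :=
  Continuous.ext_on denseRange_stoneCechUnit (continuous_betaExt f) hh <| by
    rintro _ ⟨x, rfl⟩
    rw [betaExt_stoneCechUnit, hf]

lemma betaExt_add_const (f : X →ᵇ ℝ) (c : ℝ) :
    betaExt (f + const X c) = fun p => betaExt f p + c :=
  betaExt_eq_of_comp_eq ((continuous_betaExt f).add continuous_const) fun x => by simp

lemma betaExt_inf (f g : X →ᵇ ℝ) :
    betaExt (f ⊓ g) = fun p => min (betaExt f p) (betaExt g p) :=
  betaExt_eq_of_comp_eq ((continuous_betaExt f).min (continuous_betaExt g)) fun x => by simp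

lemma betaExt_neg (f : X →ᵇ ℝ) : betaExt (-f) = fun p => -betaExt f p :=
  betaExt_eq_of_comp_eq (continuous_betaExt f).neg fun x => by simp

lemma betaExt_zero : betaExt (0 : X →ᵇ ℝ) = 0 :=
  betaExt_eq_of_comp_eq continuous_const fun _ => rfl

noncomputable def ofStoneCech (h : C(StoneCech X, ℝ)) : X →ᵇ ℝ :=
  (mkOfCompact h).compContinuous ⟨stoneCechUnit, continuous_stoneCechUnit⟩

@[simp]
lemma ofStoneCech_apply (h : C(StoneCech X, ℝ)) (x : X) : ofStoneCech h x = h (stoneCechUnit x) :=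
  rfl

lemma betaExt_ofStoneCech (h : C(StoneCech X, ℝ)) : betaExt (ofStoneCech h) = h :=
  betaExt_eq_of_comp_eq h.continuous fun _ => rfl

section Functional

variable {μ : (X →ᵇ ℝ) → ℝ}

lemma BNormed.map_const (hN : BNormed μ) (hWA : BWeaklyAdditive μ) (c : ℝ) :
    μ (const X c) = c := by
  have h0 : μ 0 = 0 := by
    have := hWA 1 (-1)
    rwa [show (1 : X →ᵇ ℝ) + const X (-1) = 0 by ext; simp, hN, add_neg_cancel] at this
  simpa [h0] using hWA 0 c

lemma BPreservesMin.monotone (hMin : BPreservesMin μ) : Monotone μ := fun f g hfg => by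
  simpa [inf_eq_left.2 hfg] using (hMin f g).le

def dominatingSet (μ : (X →ᵇ ℝ) → ℝ) : Set (StoneCech X) :=
  ⋂ f, {p | μ f ≤ betaExt f p}

lemma isClosed_dominatingSet (μ : (X →ᵇ ℝ) → ℝ) : IsClosed (dominatingSet μ) :=
  isClosed_iInter fun f => isClosed_le continuous_const (continuous_betaExt f)

lemma dominatingSet_subset_betaSupport (hN : BNormed μ) (hWA : BWeaklyAdditive μ) :
    dominatingSet μ ⊆ betaSupport μ := by
  intro p hp O hO hpO
  obtain ⟨h, hOc, hp1, -⟩ := exists_continuous_zero_one_of_isClosed hO.isClosed_compl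
    isClosed_singleton (disjoint_singleton_right.mpr fun hc => hc hpO)
  refine ⟨0, ofStoneCech (-h), fun q hq => ?_, fun hc => ?_⟩
  · simp [betaExt_zero, betaExt_ofStoneCech, hOc hq]
  · have := mem_iInter.1 hp (ofStoneCech (-h))
    have h0 : μ 0 = 0 := hN.map_const hWA 0
    simp [betaExt_ofStoneCech, hp1 rfl, ← hc, h0] at this
    linarith

lemma dominatingSet_eval (x : X) :
    dominatingSet (fun f : X →ᵇ ℝ => f x) = {stoneCechUnit x} := by
  refine Subset.antisymm (fun p hp => ?_) (singleton_subset_iff.2 (mem_iInter.2 fun f => by simp))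
  by_contra hpx
  obtain ⟨h, hp0, hx1, -⟩ := exists_continuous_zero_one_of_isClosed isClosed_singleton
    isClosed_singleton (disjoint_singleton.2 hpx)
  have := mem_iInter.1 hp (ofStoneCech h)
  norm_num [betaExt_ofStoneCech, hp0 rfl, hx1 rfl] at this

lemma exists_le_betaExt_and_betaExt_le (hμ : μ ∈ RMin X) (f g : X →ᵇ ℝ) :
    ∃ p, μ g ≤ betaExt g p ∧ betaExt f p ≤ μ f := by
  obtain ⟨hN, hWA, hMin, hWMax⟩ := hμ
  by_contra! H
  obtain ⟨m, hm0, hm⟩ : ∃ m > 0, ∀ p ∈ univ,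
      m ≤ max (betaExt f p - μ f) (μ g - betaExt g p) := by
    refine isCompact_univ.exists_forall_le' (by fun_prop) fun p _ => ?_
    by_cases hp : μ g ≤ betaExt g p
    · exact lt_max_of_lt_left (by linarith [H p hp])
    · exact lt_max_of_lt_right (by linarith)
  -- `μ` takes the value `m / 2` on the left and `0` on the right
  have hle : (g + const X (m / 2 - μ g)) ⊓ const X (m / 2) ≤ (f + const X (-μ f)) ⊔ const X 0 := by
    intro x
    have hx := hm (stoneCechUnit x) trivial
    simp only [betaExt_stoneCechUnit] at hx
    show min (g x + (m / 2 - μ g)) (m / 2) ≤ max (f x + -μ f) 0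
    rcases le_or_gt (g x) (μ g - m / 2) with hgx | hgx
    · exact min_le_of_left_le (le_max_of_le_right (by linarith))
    · have hfx : m ≤ f x - μ f := by
        rcases le_max_iff.1 hx with h | h <;> linarith
      exact min_le_of_right_le (le_max_of_le_left (by linarith))
  have := hMin.monotone hle
  rw [hMin, hWMax, hWA, hWA, hN.map_const hWA, add_sub_cancel, min_self,
    add_neg_cancel, max_self] at this
  linarith

lemma directed_superlevelSets (hWA : BWeaklyAdditive μ) (hMin : BPreservesMin μ) :
    Directed (· ⊇ ·) fun f : X →ᵇ ℝ => {p | μ f ≤ betaExt f p} := by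
  intro f g
  have hk : μ ((f + const X (-μ f)) ⊓ (g + const X (-μ g))) = 0 := by
    rw [hMin, hWA, hWA, add_neg_cancel, add_neg_cancel, min_self]
  refine ⟨(f + const X (-μ f)) ⊓ (g + const X (-μ g)), ?_, ?_⟩ <;>
  · intro p hp
    simp only [mem_ofPred_eq, hk, betaExt_inf, betaExt_add_const, le_min_iff] at hp ⊢
    linarith [hp.1, hp.2]

lemma exists_mem_dominatingSet_betaExt_le (hμ : μ ∈ RMin X) (f₀ : X →ᵇ ℝ) :
    ∃ p ∈ dominatingSet μ, betaExt f₀ p ≤ μ f₀ := by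
  let t (f : X →ᵇ ℝ) := {p | μ f ≤ betaExt f p} ∩ {p | betaExt f₀ p ≤ μ f₀}
  have hclosed (f : X →ᵇ ℝ) : IsClosed (t f) :=
    (isClosed_le continuous_const (continuous_betaExt f)).inter
      (isClosed_le (continuous_betaExt f₀) continuous_const)
  have hdir : Directed (· ⊇ ·) t := fun f g => by
    obtain ⟨k, hkf, hkg⟩ := directed_superlevelSets hμ.2.1 hμ.2.2.1 f g
    exact ⟨k, inter_subset_inter_left _ hkf, inter_subset_inter_left _ hkg⟩
  obtain ⟨p, hp⟩ := IsCompact.nonempty_iInter_of_directed_nonempty_isCompact_isClosed t hdir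
    (exists_le_betaExt_and_betaExt_le hμ f₀) (fun f => (hclosed f).isCompact) hclosed
  simp only [mem_iInter, t, mem_inter_iff] at hp
  exact ⟨p, mem_iInter.2 fun f => (hp f).1, (hp 0).2⟩

theorem isLeast_betaExt_image_dominatingSet (hμ : μ ∈ RMin X) (f : X →ᵇ ℝ) :
    IsLeast (betaExt f '' dominatingSet μ) (μ f) := by
  obtain ⟨p, hp, hle⟩ := exists_mem_dominatingSet_betaExt_le hμ f
  refine ⟨⟨p, hp, le_antisymm hle (mem_iInter.1 hp f)⟩, ?_⟩
  rintro _ ⟨q, hq, rfl⟩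
  exact mem_iInter.1 hq f

end Functional

section InfOnCompact

variable {K : Set X}

lemma betaSupport_sInf_image_subset (hK : IsCompact K) :
    betaSupport (fun f : X →ᵇ ℝ => sInf (f '' K)) ⊆ stoneCechUnit '' K := by
  intro p hp
  by_contra hpK
  obtain ⟨f, g, hfg, hne⟩ := hp _ (hK.image continuous_stoneCechUnit).isClosed.isOpen_compl hpK
  refine hne (congrArg sInf (image_congr fun x hx => ?_))
  simpa using hfg (stoneCechUnit x) fun h => h (mem_image_of_mem _ hx)

theorem sInf_image_mem_RMinC (hK : IsCompact K) (hne : K.Nonempty) :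
    (fun f : X →ᵇ ℝ => sInf (f '' K)) ∈ RMinC X := by
  have hL (f : X →ᵇ ℝ) := hK.isLeast_sInf_image hne f.continuous
  have hmono (f : X →ᵇ ℝ) {φ : ℝ → ℝ} (hφ : Monotone φ) (g : X →ᵇ ℝ) (hg : ⇑g = φ ∘ f) :
      sInf (g '' K) = φ (sInf (f '' K)) := by
    rw [hg, image_comp]
    exact (hφ.map_isLeast (hL f)).csInf_eq
  have hconst (c : ℝ) : sInf ((const X c : X →ᵇ ℝ) '' K) = c := by
    rw [show ⇑(const X c) = fun _ => c from rfl, hne.image_const, csInf_singleton]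
  have hRMin : (fun f : X →ᵇ ℝ => sInf (f '' K)) ∈ RMin X :=
    ⟨hconst 1, fun f c => hmono f (monotone_id.add_const c) _ rfl,
      fun f g => ((hL f).min_image (hL g)).csInf_eq,
      fun f c => hmono f (monotone_id.max monotone_const) _ rfl⟩
  refine ⟨hRMin, ?_, (betaSupport_sInf_image_subset hK).trans (image_subset_range _ _)⟩
  obtain ⟨x, hx⟩ := hne
  refine ⟨stoneCechUnit x,
    dominatingSet_subset_betaSupport hRMin.1 hRMin.2.1 (mem_iInter.2 fun f => ?_)⟩
  simpa using (hL f).2 (mem_image_of_mem f hx)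

end InfOnCompact

section NegDual

variable {μ : (X →ᵇ ℝ) → ℝ}

noncomputable def negDual (μ : (X →ᵇ ℝ) → ℝ) : (X →ᵇ ℝ) → ℝ := fun f => -μ (-f)

@[simp]
lemma negDual_negDual (μ : (X →ᵇ ℝ) → ℝ) : negDual (negDual μ) = μ :=
  funext fun f => by simp [negDual]

lemma betaSupport_subset_betaSupport_negDual (μ : (X →ᵇ ℝ) → ℝ) :
    betaSupport μ ⊆ betaSupport (negDual μ) := by
  intro p hp O hO hpO
  obtain ⟨f, g, hfg, hne⟩ := hp O hO hpO
  exact ⟨-f, -g, fun q hq => by simp [betaExt_neg, hfg q hq], by simpa [negDual] using hne⟩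

@[simp]
lemma betaSupport_negDual (μ : (X →ᵇ ℝ) → ℝ) : betaSupport (negDual μ) = betaSupport μ :=
  Subset.antisymm (by simpa using betaSupport_subset_betaSupport_negDual (negDual μ))
    (betaSupport_subset_betaSupport_negDual μ)

lemma negDual_normed (hN : BNormed μ) (hWA : BWeaklyAdditive μ) : BNormed (negDual μ) := by
  simp only [BNormed, negDual]
  rw [show (-1 : X →ᵇ ℝ) = const X (-1) from rfl, hN.map_const hWA, neg_neg]

lemma negDual_weaklyAdditive (hWA : BWeaklyAdditive μ) : BWeaklyAdditive (negDual μ) :=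
  fun f c => by
    simp only [negDual]
    rw [neg_add, show -const X c = const X (-c) from rfl, hWA]
    ring

lemma negDual_mem_RMaxC (hμ : μ ∈ RMinC X) : negDual μ ∈ RMaxC X := by
  obtain ⟨⟨hN, hWA, hMin, hWMax⟩, hS⟩ := hμ
  refine ⟨⟨negDual_normed hN hWA, negDual_weaklyAdditive hWA, fun f g => ?_, fun f c => ?_⟩,
    by simpa using hS⟩
  · simp only [negDual]
    rw [neg_sup, hMin, neg_inf]
  · simp only [negDual]
    rw [neg_inf, show -const X c = const X (-c) from rfl, hWMax, neg_sup, neg_neg]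

lemma negDual_mem_RMinC (hμ : μ ∈ RMaxC X) : negDual μ ∈ RMinC X := by
  obtain ⟨⟨hN, hWA, hMax, hWMin⟩, hS⟩ := hμ
  refine ⟨⟨negDual_normed hN hWA, negDual_weaklyAdditive hWA, fun f g => ?_, fun f c => ?_⟩,
    by simpa using hS⟩
  · simp only [negDual]
    rw [neg_inf, hMax, neg_sup]
  · simp only [negDual]
    rw [neg_sup, show -const X c = const X (-c) from rfl, hWMin, neg_inf, neg_neg]

end NegDual

section SetValued

variable {Y Z : Type*} [TopologicalSpace Y] [TopologicalSpace Z]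

lemma upperHemicontinuous_iff_isOpen_setOf_subset {r : Y → Set Z} :
    UpperHemicontinuous r ↔ ∀ U : Set Z, IsOpen U → IsOpen {y | r y ⊆ U} :=
  upperHemicontinuous_iff_isOpen_preimage_Iic

lemma continuous_sInf_image {r : Y → Set Z} (hr : ∀ y, (r y).Nonempty ∧ IsCompact (r y))
    (hl : LowerHemicontinuous r) (hu : UpperHemicontinuous r) {f : Z → ℝ} (hf : Continuous f) :
    Continuous fun y => sInf (f '' r y) := by
  have hL (y : Y) := (hr y).2.isLeast_sInf_image (hr y).1 hf
  refine continuous_iff_lower_upperSemicontinuous.2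
    ⟨lowerSemicontinuous_iff_isOpen_preimage.2 fun a => ?_,
      upperSemicontinuous_iff_isOpen_preimage.2 fun a => ?_⟩
  · convert upperHemicontinuous_iff_isOpen_setOf_subset.1 hu _
      (hf.isOpen_preimage _ isOpen_Ioi) using 1
    ext y
    refine ⟨fun h x hx => h.trans_le ((hL y).2 (mem_image_of_mem f hx)), fun h => ?_⟩
    obtain ⟨x, hx, hfx⟩ := (hL y).1
    show a < sInf (f '' r y)
    exact hfx ▸ h hx
  · convert lowerHemicontinuous_iff_isOpen_inter_nonempty.1 hl _
      (hf.isOpen_preimage _ isOpen_Iio) using 1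
    ext y
    refine ⟨fun h => ?_, fun ⟨x, hx, hfx⟩ => ((hL y).2 (mem_image_of_mem f hx)).trans_lt hfx⟩
    obtain ⟨x, hx, hfx⟩ := (hL y).1
    exact ⟨x, hx, show f x < a from hfx ▸ h⟩

section Inducing

variable {W : Type*} [TopologicalSpace W] {e : Z → W} {A : Y → Set W}

lemma LowerHemicontinuous.isInducing_comp_of_subset_range (hl : LowerHemicontinuous A)
    (he : IsInducing e) (hA : ∀ y, A y ⊆ range e) :
    LowerHemicontinuous fun y => e ⁻¹' A y := by
  refine lowerHemicontinuous_iff_isOpen_inter_nonempty.2 fun U hU => ?_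
  obtain ⟨V, hV, rfl⟩ := he.isOpen_iff.1 hU
  convert lowerHemicontinuous_iff_isOpen_inter_nonempty.1 hl V hV using 3 with y
  rw [← preimage_inter]
  exact ⟨fun ⟨z, hz⟩ => ⟨e z, hz⟩, fun h => h.preimage' (inter_subset_left.trans (hA y))⟩

lemma UpperHemicontinuous.isInducing_comp_of_subset_range (hu : UpperHemicontinuous A)
    (he : IsInducing e) (hA : ∀ y, A y ⊆ range e) :
    UpperHemicontinuous fun y => e ⁻¹' A y := by
  refine upperHemicontinuous_iff_isOpen_setOf_subset.2 fun U hU => ?_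
  obtain ⟨V, hV, rfl⟩ := he.isOpen_iff.1 hU
  convert upperHemicontinuous_iff_isOpen_setOf_subset.1 hu V hV using 3 with y
  exact preimage_subset_preimage_iff (hA y)

end Inducing

section CompactT2

variable [CompactSpace Z] [T2Space Z] {A : Y → Set Z}

lemma lowerHemicontinuous_of_continuous_sInf_image (hA : ∀ y, (A y).Nonempty ∧ IsClosed (A y))
    (hcont : ∀ h : C(Z, ℝ), Continuous fun y => sInf (h '' A y)) : LowerHemicontinuous A := by
  have hL (h : C(Z, ℝ)) (y : Y) := (hA y).2.isCompact.isLeast_sInf_image (hA y).1 h.continuous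
  refine lowerHemicontinuous_iff_isOpen_inter_nonempty.2 fun V hV => ?_
  refine isOpen_iff_forall_mem_open.2 fun y₀ ⟨p, hpA, hpV⟩ => ?_
  obtain ⟨h, hp0, hV1, -⟩ := exists_continuous_zero_one_of_isClosed isClosed_singleton
    hV.isClosed_compl (disjoint_singleton_left.2 (not_not_intro hpV))
  refine ⟨{y | sInf (h '' A y) < 1}, fun y hy => ?_, isOpen_lt (hcont h) continuous_const, ?_⟩
  · obtain ⟨q, hq, hqy⟩ := (hL h y).1
    refine ⟨q, hq, by_contra fun hqV => ?_⟩
    rw [mem_ofPred_eq, ← hqy, hV1 hqV] at hy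
    exact lt_irrefl _ hy
  · calc sInf (h '' A y₀) ≤ h p := (hL h y₀).2 (mem_image_of_mem h hpA)
      _ < 1 := by simp [hp0 rfl]

lemma upperHemicontinuous_of_continuous_sInf_image (hA : ∀ y, (A y).Nonempty ∧ IsClosed (A y))
    (hcont : ∀ h : C(Z, ℝ), Continuous fun y => sInf (h '' A y)) : UpperHemicontinuous A := by
  have hL (h : C(Z, ℝ)) (y : Y) := (hA y).2.isCompact.isLeast_sInf_image (hA y).1 h.continuous
  refine upperHemicontinuous_iff_isOpen_setOf_subset.2 fun V hV => ?_
  refine isOpen_iff_forall_mem_open.2 fun y₀ hy₀ => ?_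
  obtain ⟨h, hV0, hA1, -⟩ := exists_continuous_zero_one_of_isClosed hV.isClosed_compl (hA y₀).2
    (disjoint_compl_left_iff_subset.2 hy₀)
  refine ⟨{y | 0 < sInf (h '' A y)}, fun y hy q hq => by_contra fun hqV => ?_,
    isOpen_lt continuous_const (hcont h), ?_⟩
  · have := (hL h y).2 (mem_image_of_mem h hq)
    rw [hV0 hqV] at this
    exact lt_irrefl _ (hy.trans_le this)
  · obtain ⟨q, hq, hqy⟩ := (hL h y₀).1
    simp [← hqy, hA1 hq]

end CompactT2

end SetValued

section Extender

variable {Y : Type*} [TopologicalSpace Y]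

def IsContinuousCompactValuedRetraction {X : Set Y} (r : Y → Set X) : Prop :=
  (∀ y, (r y).Nonempty ∧ IsCompact (r y)) ∧ LowerHemicontinuous r ∧ UpperHemicontinuous r ∧
    ∀ x : X, r x = {x}

def IsMinExtender {X : Set Y} (u : (X →ᵇ ℝ) → (Y →ᵇ ℝ)) : Prop :=
  (∀ f (x : X), u f x = f x) ∧ ∀ y, (fun f => u f y) ∈ RMinC X

def IsMaxExtender {X : Set Y} (u : (X →ᵇ ℝ) → (Y →ᵇ ℝ)) : Prop :=
  (∀ f (x : X), u f x = f x) ∧ ∀ y, (fun f => u f y) ∈ RMaxC X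

variable {X : Set Y}

lemma isContinuousCompactValuedRetraction_iff (r : Y → Set X) :
    IsContinuousCompactValuedRetraction r ↔
      (∀ y, (r y).Nonempty ∧ IsCompact (r y)) ∧
        (∀ U : Set X, IsOpen U → IsOpen {y | (r y ∩ U).Nonempty}) ∧
        (∀ U : Set X, IsOpen U → IsOpen {y | r y ⊆ U}) ∧
        (∀ x : X, r x = {x}) := by
  rw [IsContinuousCompactValuedRetraction, lowerHemicontinuous_iff_isOpen_inter_nonempty,
    upperHemicontinuous_iff_isOpen_setOf_subset]

lemma isMinExtender_iff (u : (X →ᵇ ℝ) → (Y →ᵇ ℝ)) :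
    IsMinExtender u ↔
      (∀ (f : X →ᵇ ℝ) (x : X), u f x = f x) ∧
        u 1 = 1 ∧
        (∀ (f : X →ᵇ ℝ) (c : ℝ), u (f + const X c) = u f + const Y c) ∧
        (∀ f g : X →ᵇ ℝ, u (f ⊓ g) = u f ⊓ u g) ∧
        (∀ (f : X →ᵇ ℝ) (c : ℝ), u (f ⊔ const X c) = u f ⊔ const Y c) ∧
        (∀ y : Y, (betaSupport fun f : X →ᵇ ℝ => u f y).Nonempty ∧
          (betaSupport fun f : X →ᵇ ℝ => u f y) ⊆ range (stoneCechUnit : X → StoneCech X)) := by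
  simp only [IsMinExtender, RMinC, RMin, BNormed, BWeaklyAdditive, BPreservesMin,
    BWeaklyPreservesMax, mem_ofPred_eq, forall_and, BoundedContinuousFunction.ext_iff, coe_one,
    coe_add, coe_inf, coe_sup, Pi.one_apply, Pi.add_apply, Pi.inf_apply, Pi.sup_apply,
    const_apply, forall_comm (α := Y), and_assoc]

lemma isMaxExtender_iff (u : (X →ᵇ ℝ) → (Y →ᵇ ℝ)) :
    IsMaxExtender u ↔
      (∀ (f : X →ᵇ ℝ) (x : X), u f x = f x) ∧
        u 1 = 1 ∧
        (∀ (f : X →ᵇ ℝ) (c : ℝ), u (f + const X c) = u f + const Y c) ∧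
        (∀ f g : X →ᵇ ℝ, u (f ⊔ g) = u f ⊔ u g) ∧
        (∀ (f : X →ᵇ ℝ) (c : ℝ), u (f ⊓ const X c) = u f ⊓ const Y c) ∧
        (∀ y : Y, (betaSupport fun f : X →ᵇ ℝ => u f y).Nonempty ∧
          (betaSupport fun f : X →ᵇ ℝ => u f y) ⊆ range (stoneCechUnit : X → StoneCech X)) := by
  simp only [IsMaxExtender, RMaxC, RMax, BNormed, BWeaklyAdditive, BPreservesMax,
    BWeaklyPreservesMin, mem_ofPred_eq, forall_and, BoundedContinuousFunction.ext_iff, coe_one,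
    coe_add, coe_inf, coe_sup, Pi.one_apply, Pi.add_apply, Pi.inf_apply, Pi.sup_apply,
    const_apply, forall_comm (α := Y), and_assoc]

lemma IsMinExtender.negDual {u : (X →ᵇ ℝ) → (Y →ᵇ ℝ)} (hu : IsMinExtender u) :
    IsMaxExtender fun f => -u (-f) :=
  ⟨fun f x => by simp [hu.1], fun y => negDual_mem_RMaxC (hu.2 y)⟩

lemma IsMaxExtender.negDual {u : (X →ᵇ ℝ) → (Y →ᵇ ℝ)} (hu : IsMaxExtender u) :
    IsMinExtender fun f => -u (-f) :=
  ⟨fun f x => by simp [hu.1], fun y => negDual_mem_RMinC (hu.2 y)⟩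

theorem exists_minExtender_iff_exists_maxExtender :
    (∃ u : (X →ᵇ ℝ) → (Y →ᵇ ℝ), IsMinExtender u) ↔ ∃ u : (X →ᵇ ℝ) → (Y →ᵇ ℝ), IsMaxExtender u :=
  ⟨fun ⟨_, hu⟩ => ⟨_, hu.negDual⟩, fun ⟨_, hu⟩ => ⟨_, hu.negDual⟩⟩

theorem IsContinuousCompactValuedRetraction.exists_minExtender {r : Y → Set X}
    (hr : IsContinuousCompactValuedRetraction r) :
    ∃ u : (X →ᵇ ℝ) → (Y →ᵇ ℝ), IsMinExtender u := by
  obtain ⟨hK, hl, hu, hrx⟩ := hr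
  refine ⟨fun f => ofNormedAddCommGroup (fun y => sInf (f '' r y))
    (continuous_sInf_image hK hl hu f.continuous) ‖f‖ fun y => ?_, fun f x => ?_,
    fun y => sInf_image_mem_RMinC (hK y).2 (hK y).1⟩
  · obtain ⟨x, -, hx⟩ := ((hK y).2.isLeast_sInf_image (hK y).1 f.continuous).1
    exact hx ▸ f.norm_coe_le_norm x
  · simp [hrx x]

theorem IsMinExtender.exists_retraction [T35Space Y] {u : (X →ᵇ ℝ) → (Y →ᵇ ℝ)}
    (hu : IsMinExtender u) :
    ∃ r : Y → Set X, IsContinuousCompactValuedRetraction r := by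
  obtain ⟨hext, hμ⟩ := hu
  let A (y : Y) : Set (StoneCech X) := dominatingSet fun f => u f y
  have hLeast (y : Y) (f : X →ᵇ ℝ) : IsLeast (betaExt f '' A y) (u f y) :=
    isLeast_betaExt_image_dominatingSet (hμ y).1 f
  have hAη (y : Y) : A y ⊆ range stoneCechUnit :=
    (dominatingSet_subset_betaSupport (hμ y).1.1 (hμ y).1.2.1).trans (hμ y).2.2
  have hA (y : Y) : (A y).Nonempty ∧ IsClosed (A y) :=
    ⟨(hLeast y 0).nonempty.of_image, isClosed_dominatingSet _⟩
  have hcont (h : C(StoneCech X, ℝ)) : Continuous fun y => sInf (h '' A y) := by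
    convert (u (ofStoneCech h)).continuous with y
    rw [← (hLeast y _).csInf_eq, betaExt_ofStoneCech]
  refine ⟨fun y => stoneCechUnit ⁻¹' A y, fun y => ⟨(hA y).1.preimage' (hAη y),
    (isInducing_stoneCechUnit.isCompact_preimage_iff (hAη y)).2 (hA y).2.isCompact⟩,
    (lowerHemicontinuous_of_continuous_sInf_image hA hcont).isInducing_comp_of_subset_range
      isInducing_stoneCechUnit hAη,
    (upperHemicontinuous_of_continuous_sInf_image hA hcont).isInducing_comp_of_subset_range
      isInducing_stoneCechUnit hAη, fun x => ?_⟩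
  have hx : (fun f : X →ᵇ ℝ => u f x) = fun f => f x := funext fun f => hext f x
  simp only [A, hx, dominatingSet_eval, ← image_singleton,
    injective_stoneCechUnit_of_t35Space.preimage_image]

theorem exists_retraction_iff_exists_minExtender [T35Space Y] :
    (∃ r : Y → Set X, IsContinuousCompactValuedRetraction r) ↔
      ∃ u : (X →ᵇ ℝ) → (Y →ᵇ ℝ), IsMinExtender u :=
  ⟨fun ⟨_, hr⟩ => hr.exists_minExtender, fun ⟨_, hu⟩ => hu.exists_retraction⟩

end Extender
/-- for a subspace `X ⊆ Y`, there is a continuous compact-valued retraction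
`r : Y → X` (nonempty compact values in `X`, `r x = {x}` for `x ∈ X`) iff there is a normed,
weakly additive extender `u : C*(X) → C*(Y)` with compact supports preserving min and weakly
preserving max, iff there is such an extender preserving max and weakly preserving min. -/
theorem statement15 {Y : Type*} [TopologicalSpace Y] [T35Space Y] (X : Set Y) :
    ((∃ r : Y → Set X,
        (∀ y, (r y).Nonempty ∧ IsCompact (r y)) ∧
        (∀ U : Set X, IsOpen U → IsOpen {y | (r y ∩ U).Nonempty}) ∧
        (∀ U : Set X, IsOpen U → IsOpen {y | r y ⊆ U}) ∧
        (∀ x : X, r x = {x})) ↔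
      (∃ u : BoundedContinuousFunction X ℝ → BoundedContinuousFunction Y ℝ,
        (∀ (f : BoundedContinuousFunction X ℝ) (x : X), u f x = f x) ∧
        u 1 = 1 ∧
        (∀ (f : BoundedContinuousFunction X ℝ) (c : ℝ),
          u (f + BoundedContinuousFunction.const X c) =
            u f + BoundedContinuousFunction.const Y c) ∧
        (∀ f g : BoundedContinuousFunction X ℝ, u (f ⊓ g) = u f ⊓ u g) ∧
        (∀ (f : BoundedContinuousFunction X ℝ) (c : ℝ),
          u (f ⊔ BoundedContinuousFunction.const X c) =
            u f ⊔ BoundedContinuousFunction.const Y c) ∧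
        (∀ y : Y, (betaSupport fun f : BoundedContinuousFunction X ℝ => u f y).Nonempty ∧
          (betaSupport fun f : BoundedContinuousFunction X ℝ => u f y) ⊆
            Set.range (stoneCechUnit : X → StoneCech X)))) ∧
    ((∃ r : Y → Set X,
        (∀ y, (r y).Nonempty ∧ IsCompact (r y)) ∧
        (∀ U : Set X, IsOpen U → IsOpen {y | (r y ∩ U).Nonempty}) ∧
        (∀ U : Set X, IsOpen U → IsOpen {y | r y ⊆ U}) ∧
        (∀ x : X, r x = {x})) ↔
      (∃ u : BoundedContinuousFunction X ℝ → BoundedContinuousFunction Y ℝ,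
        (∀ (f : BoundedContinuousFunction X ℝ) (x : X), u f x = f x) ∧
        u 1 = 1 ∧
        (∀ (f : BoundedContinuousFunction X ℝ) (c : ℝ),
          u (f + BoundedContinuousFunction.const X c) =
            u f + BoundedContinuousFunction.const Y c) ∧
        (∀ f g : BoundedContinuousFunction X ℝ, u (f ⊔ g) = u f ⊔ u g) ∧
        (∀ (f : BoundedContinuousFunction X ℝ) (c : ℝ),
          u (f ⊓ BoundedContinuousFunction.const X c) =
            u f ⊓ BoundedContinuousFunction.const Y c) ∧
        (∀ y : Y, (betaSupport fun f : BoundedContinuousFunction X ℝ => u f y).Nonempty ∧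
          (betaSupport fun f : BoundedContinuousFunction X ℝ => u f y) ⊆
            Set.range (stoneCechUnit : X → StoneCech X)))) := by
  simp only [← isContinuousCompactValuedRetraction_iff, ← isMinExtender_iff, ← isMaxExtender_iff]
  exact ⟨exists_retraction_iff_exists_minExtender,
    exists_retraction_iff_exists_minExtender.trans exists_minExtender_iff_exists_maxExtender⟩
end

section
/- Let Y be a Tychonoff space and X ⊆ Y a subspace. The following are equivalent: (i) there exists an upper semicontinuous compact-valued set-valued map r : Y → βX with r(x) = {η(x)} for all x ∈ X; (ii) there exists an extender u : C*(X) → C*_lsc(Y) which is normed, weakly additive, preserves min and weakly preserves max; (iii) there exists an extender u : C*(X) → C*_usc(Y) which is normed, weakly additive, preserves max and weakly preserves min. -/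
/-!
For `f ∈ C*(X)` let `f^β ∈ C(βX)` be its continuous extension. A map `r` as in (i) yields the
extender `u f y = min_{r y} f^β`; lower semicontinuity of `u f` is exactly upper semicontinuity of
`r` tested on the open sets `{f^β > t}`. Conversely, an extender `u` as in (ii) yields
`r y = {p | u f y ≤ f^β p for all f}`. Its graph is closed because every `u f` is lower
semicontinuous, and a closed graph into the compact space `βX` gives compact values and upper
semicontinuity. Each `r y` is nonempty by the finite intersection property, since `u` preserves
finite minima and `u f y ≤ sup f` (weak preservation of max). Finally `r x = {η x}` because `u` is
an extender and `C(βX)` separates points. Statement (iii) is dual to (ii) under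
`u ↦ (f ↦ -u(-f))`.
-/

open Set

namespace BoundedContinuousFunction

variable {X : Type*} [TopologicalSpace X]

def codRestrictIcc (f : X →ᵇ ℝ) : C(X, Icc (-‖f‖) ‖f‖) :=
  ⟨_, f.continuous.codRestrict fun x => abs_le.1 (f.norm_coe_le_norm x)⟩

/-- The continuous extension `f^β : βX → ℝ` of `f`; `stoneCechExtend` needs a compact codomain,
hence the detour through `[-‖f‖, ‖f‖]`. -/
noncomputable def stoneCechExtend (f : X →ᵇ ℝ) : C(StoneCech X, ℝ) where
  toFun p := (_root_.stoneCechExtend f.codRestrictIcc.continuous p :)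
  continuous_toFun := continuous_subtype_val.comp (continuous_stoneCechExtend _)

@[simp]
theorem stoneCechExtend_stoneCechUnit (f : X →ᵇ ℝ) (x : X) :
    f.stoneCechExtend (stoneCechUnit x) = f x :=
  congrArg Subtype.val (_root_.stoneCechExtend_stoneCechUnit _ x)

theorem abs_stoneCechExtend_le (f : X →ᵇ ℝ) (p : StoneCech X) : |f.stoneCechExtend p| ≤ ‖f‖ :=
  abs_le.2 (_root_.stoneCechExtend f.codRestrictIcc.continuous p).2

theorem stoneCechExtend_unique {f : X →ᵇ ℝ} {g : C(StoneCech X, ℝ)}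
    (h : ∀ x, g (stoneCechUnit x) = f x) : f.stoneCechExtend = g :=
  ContinuousMap.coe_injective <| stoneCech_hom_ext (map_continuous _) (map_continuous _) <|
    funext fun x => by simp [h]

theorem stoneCechExtend_const (c : ℝ) :
    (const X c).stoneCechExtend = ContinuousMap.const _ c :=
  stoneCechExtend_unique fun _ => rfl

theorem stoneCechExtend_one : (1 : X →ᵇ ℝ).stoneCechExtend = 1 :=
  stoneCechExtend_unique fun _ => rfl

theorem stoneCechExtend_add (f g : X →ᵇ ℝ) :
    (f + g).stoneCechExtend = f.stoneCechExtend + g.stoneCechExtend :=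
  stoneCechExtend_unique fun _ => by simp

theorem stoneCechExtend_inf (f g : X →ᵇ ℝ) :
    (f ⊓ g).stoneCechExtend = f.stoneCechExtend ⊓ g.stoneCechExtend :=
  stoneCechExtend_unique fun _ => by simp

theorem stoneCechExtend_sup (f g : X →ᵇ ℝ) :
    (f ⊔ g).stoneCechExtend = f.stoneCechExtend ⊔ g.stoneCechExtend :=
  stoneCechExtend_unique fun _ => by simp

theorem stoneCechExtend_mono {f g : X →ᵇ ℝ} (h : f ≤ g) :
    f.stoneCechExtend ≤ g.stoneCechExtend := by
  rw [← inf_eq_left.2 h, stoneCechExtend_inf]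
  exact inf_le_right

theorem neg_add_const (f : X →ᵇ ℝ) (c : ℝ) : -(f + const X c) = -f + const X (-c) := by
  ext; simp [add_comm]

theorem neg_const (c : ℝ) : -const X c = const X (-c) := by
  ext; simp

theorem neg_one_eq_one_add_const : -(1 : X →ᵇ ℝ) = 1 + const X (-2) := by
  ext; norm_num

theorem stoneCechExtend_compContinuous_stoneCechUnit (g : C(StoneCech X, ℝ)) :
    ((mkOfCompact g).compContinuous ⟨stoneCechUnit, continuous_stoneCechUnit⟩).stoneCechExtend
      = g :=
  stoneCechExtend_unique fun _ => rfl

end BoundedContinuousFunction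

section CompactInf

variable {K : Type*} [TopologicalSpace K] {s : Set K}

theorem IsCompact.sInf_image_mem (hs : IsCompact s) (hne : s.Nonempty) (F : C(K, ℝ)) :
    sInf (F '' s) ∈ F '' s :=
  (hs.image F.continuous).sInf_mem (hne.image F)

theorem IsCompact.sInf_image_le (hs : IsCompact s) (F : C(K, ℝ)) {p : K} (hp : p ∈ s) :
    sInf (F '' s) ≤ F p :=
  csInf_le (hs.image F.continuous).bddBelow (mem_image_of_mem F hp)

theorem IsCompact.lt_sInf_image_iff (hs : IsCompact s) (hne : s.Nonempty) (F : C(K, ℝ)) (t : ℝ) :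
    t < sInf (F '' s) ↔ s ⊆ F ⁻¹' Ioi t := by
  refine ⟨fun ht p hp => ht.trans_le (hs.sInf_image_le F hp), fun hsub => ?_⟩
  obtain ⟨p, hp, hpF⟩ := hs.sInf_image_mem hne F
  exact hpF ▸ hsub hp

theorem IsCompact.sInf_image_comp_of_monotone (hs : IsCompact s) (hne : s.Nonempty) (F : C(K, ℝ))
    {φ : ℝ → ℝ} (hφ : Continuous φ) (hmono : Monotone φ) :
    sInf ((φ ∘ F) '' s) = φ (sInf (F '' s)) := by
  rw [image_comp, hmono.map_csInf_of_continuousAt hφ.continuousAt (hne.image F)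
    (hs.image F.continuous).bddBelow]

theorem IsCompact.sInf_image_inf (hs : IsCompact s) (hne : s.Nonempty) (F G : C(K, ℝ)) :
    sInf (⇑(F ⊓ G) '' s) = min (sInf (F '' s)) (sInf (G '' s)) := by
  refine le_antisymm (le_min ?_ ?_) ?_
  · refine le_csInf (hne.image F) (forall_mem_image.2 fun p hp => ?_)
    exact (hs.sInf_image_le (F ⊓ G) hp).trans inf_le_left
  · refine le_csInf (hne.image G) (forall_mem_image.2 fun p hp => ?_)
    exact (hs.sInf_image_le (F ⊓ G) hp).trans inf_le_right
  · obtain ⟨p, hp, hpFG⟩ := hs.sInf_image_mem hne (F ⊓ G)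
    rw [← hpFG]
    exact min_le_min (hs.sInf_image_le F hp) (hs.sInf_image_le G hp)

end CompactInf

theorem LowerSemicontinuous.isClosed_setOf_le {α : Type*} [TopologicalSpace α] {g h : α → ℝ}
    (hg : LowerSemicontinuous g) (hh : Continuous h) : IsClosed {x | g x ≤ h x} := by
  refine isOpen_compl_iff.1 <| isOpen_iff_mem_nhds.2 fun x (hx : ¬g x ≤ h x) => ?_
  obtain ⟨t, hht, htg⟩ := exists_between (not_le.1 hx)
  filter_upwards [hg x t htg, hh.continuousAt.eventually (gt_mem_nhds hht)] with x' hgx' hhx'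
  exact fun hle => (hle.trans hhx'.le).not_gt hgx'

theorem isOpen_setOf_subset_of_isClosed_graph {Y K : Type*} [TopologicalSpace Y]
    [TopologicalSpace K] [CompactSpace K] {r : Y → Set K}
    (hr : IsClosed {q : Y × K | q.2 ∈ r q.1}) {U : Set K} (hU : IsOpen U) :
    IsOpen {y | r y ⊆ U} := by
  have hcompl : {y | r y ⊆ U}ᶜ = Prod.fst '' ({q : Y × K | q.2 ∈ r q.1} ∩ univ ×ˢ Uᶜ) := by
    ext y
    simp [not_subset]
  rw [← isClosed_compl_iff, hcompl]
  exact isClosedMap_fst_of_compactSpace _ (hr.inter (isClosed_univ.prod hU.isClosed_compl))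

open BoundedContinuousFunction

section Extenders

variable {Y : Type*} [TopologicalSpace Y] {X : Set Y}

def IsCompactUSCExtension (X : Set Y) (r : Y → Set (StoneCech X)) : Prop :=
  (∀ y, (r y).Nonempty ∧ IsCompact (r y)) ∧
  (∀ U : Set (StoneCech X), IsOpen U → IsOpen {y | r y ⊆ U}) ∧
  (∀ x : X, r x = {stoneCechUnit x})

def IsLSCMinExtender (X : Set Y) (u : (X →ᵇ ℝ) → Y → ℝ) : Prop :=
  (∀ f, LowerSemicontinuous (u f)) ∧
  (∀ f, ∃ M : ℝ, ∀ y, |u f y| ≤ M) ∧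
  (∀ (f : X →ᵇ ℝ) (x : X), u f x = f x) ∧
  (∀ y, u 1 y = 1) ∧
  (∀ (f : X →ᵇ ℝ) (c : ℝ) (y : Y), u (f + const X c) y = u f y + c) ∧
  (∀ (f g : X →ᵇ ℝ) (y : Y), u (f ⊓ g) y = min (u f y) (u g y)) ∧
  (∀ (f : X →ᵇ ℝ) (c : ℝ) (y : Y), u (f ⊔ const X c) y = max (u f y) c)

def IsUSCMaxExtender (X : Set Y) (u : (X →ᵇ ℝ) → Y → ℝ) : Prop :=
  (∀ f, UpperSemicontinuous (u f)) ∧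
  (∀ f, ∃ M : ℝ, ∀ y, |u f y| ≤ M) ∧
  (∀ (f : X →ᵇ ℝ) (x : X), u f x = f x) ∧
  (∀ y, u 1 y = 1) ∧
  (∀ (f : X →ᵇ ℝ) (c : ℝ) (y : Y), u (f + const X c) y = u f y + c) ∧
  (∀ (f g : X →ᵇ ℝ) (y : Y), u (f ⊔ g) y = max (u f y) (u g y)) ∧
  (∀ (f : X →ᵇ ℝ) (c : ℝ) (y : Y), u (f ⊓ const X c) y = min (u f y) c)

theorem IsCompactUSCExtension.isLSCMinExtender {r : Y → Set (StoneCech X)}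
    (hr : IsCompactUSCExtension X r) :
    IsLSCMinExtender X fun f y => sInf (f.stoneCechExtend '' r y) := by
  obtain ⟨hcpt, husc, hunit⟩ := hr
  refine ⟨fun f => ?_, fun f => ⟨‖f‖, fun y => ?_⟩, fun f x => ?_, fun y => ?_,
    fun f c y => ?_, fun f g y => ?_, fun f c y => ?_⟩ <;> dsimp only
  · refine lowerSemicontinuous_iff_isOpen_preimage.2 fun t => ?_
    simpa only [preimage, mem_Ioi, (hcpt _).2.lt_sInf_image_iff (hcpt _).1] using
      husc _ (isOpen_Ioi.preimage (map_continuous f.stoneCechExtend))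
  · obtain ⟨p, -, hp⟩ := (hcpt y).2.sInf_image_mem (hcpt y).1 f.stoneCechExtend
    exact hp ▸ abs_stoneCechExtend_le f p
  · simp [hunit x]
  · rw [stoneCechExtend_one, ContinuousMap.coe_one, Pi.one_def, (hcpt y).1.image_const,
      csInf_singleton]
  · rw [stoneCechExtend_add, stoneCechExtend_const]
    exact (hcpt y).2.sInf_image_comp_of_monotone (hcpt y).1 _ (continuous_add_const c)
      (monotone_id.add_const c)
  · rw [stoneCechExtend_inf]
    exact (hcpt y).2.sInf_image_inf (hcpt y).1 _ _
  · rw [stoneCechExtend_sup, stoneCechExtend_const]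
    exact (hcpt y).2.sInf_image_comp_of_monotone (hcpt y).1 _ (continuous_id.max continuous_const)
      (monotone_id.max monotone_const)

/-- The map `r` of (i) recovered from an extender `u` as in (ii). -/
def extenderCarrier (u : (X →ᵇ ℝ) → Y → ℝ) (y : Y) : Set (StoneCech X) :=
  ⋂ f, {p | u f y ≤ f.stoneCechExtend p}

namespace IsLSCMinExtender

variable {u : (X →ᵇ ℝ) → Y → ℝ}

theorem apply_const (hu : IsLSCMinExtender X u) (c : ℝ) (y : Y) : u (const X c) y = c := by
  obtain ⟨-, -, -, hone, hadd, -, -⟩ := hu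
  have h := hadd 1 (c - 1) y
  rwa [hone, add_sub_cancel, show (1 : X →ᵇ ℝ) + const X (c - 1) = const X c by ext; simp] at h

theorem le_of_le_const (hu : IsLSCMinExtender X u) {f : X →ᵇ ℝ} {c : ℝ} (hfc : f ≤ const X c)
    (y : Y) : u f y ≤ c := by
  obtain ⟨-, -, -, -, -, -, hsup⟩ := id hu
  have h := hsup f c y
  rw [sup_eq_right.2 hfc, hu.apply_const] at h
  exact h ▸ le_max_left _ _

theorem exists_le_stoneCechExtend (hu : IsLSCMinExtender X u) (f : X →ᵇ ℝ) (y : Y) :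
    ∃ p, u f y ≤ f.stoneCechExtend p := by
  by_contra! h
  obtain ⟨a, ha, hle⟩ := isCompact_univ.exists_forall_le' (f := fun p => -f.stoneCechExtend p)
    (by fun_prop) (a := -u f y) fun p _ => neg_lt_neg (h p)
  have hfc : f ≤ const X (-a) := fun x => by
    simpa [le_neg] using hle (stoneCechUnit x) (mem_univ _)
  linarith [hu.le_of_le_const hfc y]

theorem extenderCarrier_nonempty (hu : IsLSCMinExtender X u) (y : Y) :
    (extenderCarrier u y).Nonempty := by
  obtain ⟨-, -, -, -, hadd, hinf, -⟩ := id hu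
  suffices hfin : ∀ T : Finset (X →ᵇ ℝ),
      (univ ∩ ⋂ f ∈ T, {p | u f y ≤ f.stoneCechExtend p}).Nonempty by
    simpa [extenderCarrier] using isCompact_univ.inter_iInter_nonempty _
      (fun f => isClosed_le continuous_const (map_continuous _)) hfin
  classical
  intro T
  -- `1` is inserted only to make the family nonempty
  set g := (insert 1 T).inf' (Finset.insert_nonempty 1 T) fun f => f + const X (-u f y)
  have hg : u g y = 0 := by
    rw [Finset.apply_inf'_eq_inf'_comp _ (fun f => u f y) (hinf · · y)]
    simp [hadd]
  obtain ⟨p, hp⟩ := hu.exists_le_stoneCechExtend g y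
  refine ⟨p, mem_univ p, mem_iInter₂.2 fun f hf => ?_⟩
  have hgf : g.stoneCechExtend p ≤ (f + const X (-u f y)).stoneCechExtend p :=
    stoneCechExtend_mono (Finset.inf'_le _ (Finset.mem_insert_of_mem hf)) p
  simp only [stoneCechExtend_add, stoneCechExtend_const, ContinuousMap.add_apply,
    ContinuousMap.const_apply] at hgf
  show u f y ≤ _
  linarith

theorem isClosed_graph_extenderCarrier (hu : IsLSCMinExtender X u) :
    IsClosed {q : Y × StoneCech X | q.2 ∈ extenderCarrier u q.1} := by
  simp only [extenderCarrier, mem_iInter, ofPred_forall]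
  exact isClosed_iInter fun f => ((hu.1 f).comp continuous_fst).isClosed_setOf_le
    ((map_continuous _).comp continuous_snd)

theorem extenderCarrier_stoneCechUnit (hu : IsLSCMinExtender X u) (x : X) :
    extenderCarrier u x = {stoneCechUnit x} := by
  obtain ⟨-, -, hext, -⟩ := hu
  refine Subset.antisymm (fun p hp => ?_)
    (singleton_subset_iff.2 (mem_iInter.2 fun f => by simp [hext]))
  by_contra hpx
  obtain ⟨g, hgp, hgx, -⟩ := exists_continuous_zero_one_of_isClosed isClosed_singleton
    isClosed_singleton (disjoint_singleton.2 hpx)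
  have := mem_iInter.1 hp ((mkOfCompact g).compContinuous ⟨_, continuous_stoneCechUnit⟩)
  norm_num [stoneCechExtend_compContinuous_stoneCechUnit, hext, hgp rfl, hgx rfl] at this

theorem isCompactUSCExtension (hu : IsLSCMinExtender X u) :
    IsCompactUSCExtension X (extenderCarrier u) :=
  ⟨fun y => ⟨hu.extenderCarrier_nonempty y,
      (hu.isClosed_graph_extenderCarrier.preimage (Continuous.prodMk_right y)).isCompact⟩,
    fun _ hU => isOpen_setOf_subset_of_isClosed_graph hu.isClosed_graph_extenderCarrier hU,
    hu.extenderCarrier_stoneCechUnit⟩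

end IsLSCMinExtender

section Duality

variable {u : (X →ᵇ ℝ) → Y → ℝ}

theorem IsLSCMinExtender.neg (hu : IsLSCMinExtender X u) :
    IsUSCMaxExtender X fun f y => -u (-f) y := by
  obtain ⟨hlsc, hbdd, hext, hone, hadd, hinf, hsup⟩ := hu
  refine ⟨fun f => continuous_neg.comp_lowerSemicontinuous_antitone (hlsc (-f))
    fun _ _ => neg_le_neg, fun f => ?_, fun f x => by simp [hext], fun y => ?_,
    fun f c y => ?_, fun f g y => ?_, fun f c y => ?_⟩ <;> dsimp only
  · obtain ⟨M, hM⟩ := hbdd (-f)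
    exact ⟨M, fun y => (abs_neg _).trans_le (hM y)⟩
  · rw [neg_one_eq_one_add_const, hadd, hone]; norm_num
  · rw [neg_add_const, hadd]; ring
  · rw [neg_sup, hinf, max_neg_neg]
  · rw [neg_inf, neg_const, hsup, ← neg_neg c, ← min_neg_neg, neg_neg, neg_neg]

theorem IsUSCMaxExtender.neg (hu : IsUSCMaxExtender X u) :
    IsLSCMinExtender X fun f y => -u (-f) y := by
  obtain ⟨husc, hbdd, hext, hone, hadd, hsup, hinf⟩ := hu
  refine ⟨fun f => continuous_neg.comp_upperSemicontinuous_antitone (husc (-f))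
    fun _ _ => neg_le_neg, fun f => ?_, fun f x => by simp [hext], fun y => ?_,
    fun f c y => ?_, fun f g y => ?_, fun f c y => ?_⟩ <;> dsimp only
  · obtain ⟨M, hM⟩ := hbdd (-f)
    exact ⟨M, fun y => (abs_neg _).trans_le (hM y)⟩
  · rw [neg_one_eq_one_add_const, hadd, hone]; norm_num
  · rw [neg_add_const, hadd]; ring
  · rw [neg_inf, hsup, min_neg_neg]
  · rw [neg_sup, neg_const, hinf, ← neg_neg c, ← max_neg_neg, neg_neg, neg_neg]

end Duality

end Extenders

theorem statement16_general {Y : Type*} [TopologicalSpace Y] (X : Set Y) :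
    ((∃ r : Y → Set (StoneCech X),
        (∀ y, (r y).Nonempty ∧ IsCompact (r y)) ∧
        (∀ U : Set (StoneCech X), IsOpen U → IsOpen {y | r y ⊆ U}) ∧
        (∀ x : X, r x = {stoneCechUnit x})) ↔
      (∃ u : BoundedContinuousFunction X ℝ → Y → ℝ,
        (∀ f, LowerSemicontinuous (u f)) ∧
        (∀ f, ∃ M : ℝ, ∀ y, |u f y| ≤ M) ∧
        (∀ (f : BoundedContinuousFunction X ℝ) (x : X), u f x = f x) ∧
        (∀ y, u 1 y = 1) ∧
        (∀ (f : BoundedContinuousFunction X ℝ) (c : ℝ) (y : Y),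
          u (f + BoundedContinuousFunction.const X c) y = u f y + c) ∧
        (∀ (f g : BoundedContinuousFunction X ℝ) (y : Y),
          u (f ⊓ g) y = min (u f y) (u g y)) ∧
        (∀ (f : BoundedContinuousFunction X ℝ) (c : ℝ) (y : Y),
          u (f ⊔ BoundedContinuousFunction.const X c) y = max (u f y) c))) ∧
    ((∃ r : Y → Set (StoneCech X),
        (∀ y, (r y).Nonempty ∧ IsCompact (r y)) ∧
        (∀ U : Set (StoneCech X), IsOpen U → IsOpen {y | r y ⊆ U}) ∧
        (∀ x : X, r x = {stoneCechUnit x})) ↔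
      (∃ u : BoundedContinuousFunction X ℝ → Y → ℝ,
        (∀ f, UpperSemicontinuous (u f)) ∧
        (∀ f, ∃ M : ℝ, ∀ y, |u f y| ≤ M) ∧
        (∀ (f : BoundedContinuousFunction X ℝ) (x : X), u f x = f x) ∧
        (∀ y, u 1 y = 1) ∧
        (∀ (f : BoundedContinuousFunction X ℝ) (c : ℝ) (y : Y),
          u (f + BoundedContinuousFunction.const X c) y = u f y + c) ∧
        (∀ (f g : BoundedContinuousFunction X ℝ) (y : Y),
          u (f ⊔ g) y = max (u f y) (u g y)) ∧
        (∀ (f : BoundedContinuousFunction X ℝ) (c : ℝ) (y : Y),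
          u (f ⊓ BoundedContinuousFunction.const X c) y = min (u f y) c))) := by
  have iff_lsc : (∃ r, IsCompactUSCExtension X r) ↔ ∃ u, IsLSCMinExtender X u :=
    ⟨fun ⟨_, hr⟩ => ⟨_, hr.isLSCMinExtender⟩, fun ⟨_, hu⟩ => ⟨_, hu.isCompactUSCExtension⟩⟩
  have lsc_iff_usc : (∃ u, IsLSCMinExtender X u) ↔ ∃ u, IsUSCMaxExtender X u :=
    ⟨fun ⟨_, hu⟩ => ⟨_, hu.neg⟩, fun ⟨_, hu⟩ => ⟨_, hu.neg⟩⟩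
  exact ⟨iff_lsc, iff_lsc.trans lsc_iff_usc⟩

/-- for a subspace `X ⊆ Y`, the following are equivalent: (i) there is an upper
semicontinuous compact-valued map `r : Y → βX` with `r x = {η x}` for `x ∈ X`; (ii) there is a
normed, weakly additive extender `u : C*(X) → C*_lsc(Y)` preserving min and weakly preserving
max; (iii) there is a normed, weakly additive extender `u : C*(X) → C*_usc(Y)` preserving max
and weakly preserving min. -/
theorem statement16 {Y : Type*} [TopologicalSpace Y] [T35Space Y] (X : Set Y) :
    ((∃ r : Y → Set (StoneCech X),
        (∀ y, (r y).Nonempty ∧ IsCompact (r y)) ∧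
        (∀ U : Set (StoneCech X), IsOpen U → IsOpen {y | r y ⊆ U}) ∧
        (∀ x : X, r x = {stoneCechUnit x})) ↔
      (∃ u : BoundedContinuousFunction X ℝ → Y → ℝ,
        (∀ f, LowerSemicontinuous (u f)) ∧
        (∀ f, ∃ M : ℝ, ∀ y, |u f y| ≤ M) ∧
        (∀ (f : BoundedContinuousFunction X ℝ) (x : X), u f x = f x) ∧
        (∀ y, u 1 y = 1) ∧
        (∀ (f : BoundedContinuousFunction X ℝ) (c : ℝ) (y : Y),
          u (f + BoundedContinuousFunction.const X c) y = u f y + c) ∧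
        (∀ (f g : BoundedContinuousFunction X ℝ) (y : Y),
          u (f ⊓ g) y = min (u f y) (u g y)) ∧
        (∀ (f : BoundedContinuousFunction X ℝ) (c : ℝ) (y : Y),
          u (f ⊔ BoundedContinuousFunction.const X c) y = max (u f y) c))) ∧
    ((∃ r : Y → Set (StoneCech X),
        (∀ y, (r y).Nonempty ∧ IsCompact (r y)) ∧
        (∀ U : Set (StoneCech X), IsOpen U → IsOpen {y | r y ⊆ U}) ∧
        (∀ x : X, r x = {stoneCechUnit x})) ↔
      (∃ u : BoundedContinuousFunction X ℝ → Y → ℝ,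
        (∀ f, UpperSemicontinuous (u f)) ∧
        (∀ f, ∃ M : ℝ, ∀ y, |u f y| ≤ M) ∧
        (∀ (f : BoundedContinuousFunction X ℝ) (x : X), u f x = f x) ∧
        (∀ y, u 1 y = 1) ∧
        (∀ (f : BoundedContinuousFunction X ℝ) (c : ℝ) (y : Y),
          u (f + BoundedContinuousFunction.const X c) y = u f y + c) ∧
        (∀ (f g : BoundedContinuousFunction X ℝ) (y : Y),
          u (f ⊔ g) y = max (u f y) (u g y)) ∧
        (∀ (f : BoundedContinuousFunction X ℝ) (c : ℝ) (y : Y),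
          u (f ⊓ BoundedContinuousFunction.const X c) y = min (u f y) c))) :=
  statement16_general X
end

section
/- Let Y be a Tychonoff space and X ⊆ Y a nonempty compact connected subspace. Suppose there exists an extender u : C*(X) → C*_lsc(Y) with u(1_X) = 1_Y preserving both max and min, or an extender u : C*(X) → C*_usc(Y) with u(1_X) = 1_Y preserving both max and min. Then there exists an upper semicontinuous set-valued map r : Y → X whose values are nonempty compact connected subsets of X and such that r(x) = {x} for all x ∈ X. -/
/-!
Call `g` active at `y` when `1 < u g y`, and let `r y` be the set of points where every active
`g` is at least `1`. This is an intersection of closed sets, directed because `u` preserves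
`min`, each nonempty because `u` is monotone with `u 1 = 1`; so `r y` is nonempty by
compactness. Since the sets where `g` is active are open, a finite subcover of the complement
of an open `U ⊇ r y` shows that `r` is upper semicontinuous. If `r y` split into disjoint
closed pieces `A` and `B`, an Urysohn function yields `h₁` vanishing on `B` and `h₂` vanishing
on `A` with `g ≤ h₁ ⊔ h₂` for an active `g`; as `u` preserves `max`, `h₁` or `h₂` is active,
impossible since `r y` meets both `B` and `A`. The upper semicontinuous case becomes the lower
semicontinuous one under `u ↦ (f ↦ 2 - u (2 - f))`.
-/

open Set BoundedContinuousFunction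

namespace LatticeExtender

variable {X Y : Type*} [TopologicalSpace X]

def multiRetraction (u : (X →ᵇ ℝ) → Y → ℝ) (y : Y) : Set X :=
  {x | ∀ g : X →ᵇ ℝ, 1 < u g y → 1 ≤ g x}

theorem multiRetraction_eq_iInter (u : (X →ᵇ ℝ) → Y → ℝ) (y : Y) :
    multiRetraction u y = ⋂ g : {g : X →ᵇ ℝ // 1 < u g y}, {x | 1 ≤ g.1 x} := by
  ext x
  simp [multiRetraction]

theorem isClosed_multiRetraction (u : (X →ᵇ ℝ) → Y → ℝ) (y : Y) :
    IsClosed (multiRetraction u y) := by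
  rw [multiRetraction_eq_iInter]
  exact isClosed_iInter fun g => isClosed_le continuous_const g.1.continuous

variable {u : (X →ᵇ ℝ) → Y → ℝ}

theorem monotone_of_map_inf (hmin : ∀ f g y, u (f ⊓ g) y = min (u f y) (u g y)) :
    Monotone u := by
  intro f g hfg y
  rw [← inf_eq_left.2 hfg, hmin]
  exact min_le_right _ _

theorem multiRetraction_eq_univ {y : Y} (hy : ∀ g, u g y ≤ 1) :
    multiRetraction u y = univ :=
  eq_univ_of_forall fun _ g hg => absurd hg (hy g).not_gt

theorem self_mem_multiRetraction {e : X → Y}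
    (hext : ∀ f x, u f (e x) = f x) (x : X) : x ∈ multiRetraction u (e x) :=
  fun g hg => (hext g x ▸ hg).le

def reflectAboutOne (u : (X →ᵇ ℝ) → Y → ℝ) : (X →ᵇ ℝ) → Y → ℝ :=
  fun f y => 2 - u (2 - f) y

theorem reflectAboutOne_extends {e : X → Y} (hext : ∀ f x, u f (e x) = f x)
    (f : X →ᵇ ℝ) (x : X) :
    reflectAboutOne u f (e x) = f x := by
  simp [reflectAboutOne, hext]

theorem reflectAboutOne_one (hone : ∀ y, u 1 y = 1) (y : Y) : reflectAboutOne u 1 y = 1 := by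
  norm_num [reflectAboutOne, hone]

theorem reflectAboutOne_sup (hmin : ∀ f g y, u (f ⊓ g) y = min (u f y) (u g y))
    (f g : X →ᵇ ℝ) (y : Y) :
    reflectAboutOne u (f ⊔ g) y = max (reflectAboutOne u f y) (reflectAboutOne u g y) := by
  simp only [reflectAboutOne, sub_sup, hmin, max_sub_sub_left]

theorem reflectAboutOne_inf (hmax : ∀ f g y, u (f ⊔ g) y = max (u f y) (u g y))
    (f g : X →ᵇ ℝ) (y : Y) :
    reflectAboutOne u (f ⊓ g) y = min (reflectAboutOne u f y) (reflectAboutOne u g y) := by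
  simp only [reflectAboutOne, sub_inf, hmax, min_sub_sub_left]

theorem isOpen_setOf_one_lt_reflectAboutOne [TopologicalSpace Y]
    (husc : ∀ f, UpperSemicontinuous (u f)) (f : X →ᵇ ℝ) :
    IsOpen {y | 1 < reflectAboutOne u f y} := by
  convert (husc (2 - f)).isOpen_preimage 1 using 1
  ext y
  simp only [reflectAboutOne, mem_ofPred_eq, mem_preimage, mem_Iio]
  constructor <;> intro h <;> linarith

section Compact

variable [CompactSpace X]

theorem multiRetraction_nonempty [Nonempty X] (hone : ∀ y, u 1 y = 1)
    (hmin : ∀ f g y, u (f ⊓ g) y = min (u f y) (u g y)) (y : Y) :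
    (multiRetraction u y).Nonempty := by
  by_cases hy : ∀ g, u g y ≤ 1
  · simp [multiRetraction_eq_univ hy]
  push Not at hy
  obtain ⟨g₀, hg₀⟩ := hy
  have : Nonempty {g : X →ᵇ ℝ // 1 < u g y} := ⟨⟨g₀, hg₀⟩⟩
  rw [multiRetraction_eq_iInter]
  refine IsCompact.nonempty_iInter_of_directed_nonempty_isCompact_isClosed _ ?_ ?_
    (fun g => (isClosed_le continuous_const g.1.continuous).isCompact)
    (fun g => isClosed_le continuous_const g.1.continuous)
  · rintro ⟨g₁, h₁⟩ ⟨g₂, h₂⟩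
    refine ⟨⟨g₁ ⊓ g₂, by rw [hmin]; exact lt_min h₁ h₂⟩, ?_, ?_⟩ <;>
      intro x (hx : 1 ≤ (g₁ ⊓ g₂) x)
    exacts [hx.trans inf_le_left, hx.trans inf_le_right]
  · rintro ⟨g, hg⟩
    by_contra hempty
    have hg1 : g ≤ 1 := fun x => le_of_lt (not_le.1 fun h => hempty ⟨x, h⟩)
    exact (monotone_of_map_inf hmin hg1 y).trans_eq (hone y) |>.not_gt hg

theorem isOpen_setOf_multiRetraction_subset [TopologicalSpace Y]
    (hopen : ∀ f, IsOpen {y | 1 < u f y}) {U : Set X} (hU : IsOpen U) :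
    IsOpen {y | multiRetraction u y ⊆ U} := by
  rw [isOpen_iff_forall_mem_open]
  intro y₀ hy₀
  have hcover : Uᶜ ⊆ ⋃ g : {g : X →ᵇ ℝ // 1 < u g y₀}, {x | g.1 x < 1} := by
    intro x hx
    have hxr : x ∉ multiRetraction u y₀ := fun h => hx (hy₀ h)
    simp only [multiRetraction, mem_ofPred_eq, not_forall, not_le] at hxr
    obtain ⟨g, hg, hgx⟩ := hxr
    exact mem_iUnion.2 ⟨⟨g, hg⟩, hgx⟩
  obtain ⟨t, ht⟩ := hU.isClosed_compl.isCompact.elim_finite_subcover _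
    (fun g => isOpen_lt g.1.continuous continuous_const) hcover
  refine ⟨⋂ g ∈ t, {y | 1 < u g.1 y}, ?_, isOpen_biInter_finset fun g _ => hopen g.1,
    mem_iInter₂.2 fun g _ => g.2⟩
  intro y hy x hx
  by_contra hxU
  obtain ⟨g, hgt, hgx⟩ := mem_iUnion₂.1 (ht hxU)
  exact (hx g.1 (mem_iInter₂.1 hy g hgt)).not_gt hgx

variable [T2Space X]

theorem multiRetraction_apply_eq_singleton {e : X → Y}
    (hext : ∀ f x, u f (e x) = f x) (x : X) : multiRetraction u (e x) = {x} := by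
  refine Subset.antisymm (fun x' hx' => ?_)
    (singleton_subset_iff.2 (self_mem_multiRetraction hext x))
  by_contra hne
  obtain ⟨q, hqx', hqx, -⟩ := exists_continuous_zero_one_of_isClosed
    isClosed_singleton isClosed_singleton (disjoint_singleton.2 hne)
  have := hx' (2 • mkOfCompact q) (by norm_num [hext, hqx rfl])
  norm_num [hqx' rfl] at this

theorem isPreconnected_multiRetraction [PreconnectedSpace X]
    (hmax : ∀ f g y, u (f ⊔ g) y = max (u f y) (u g y))
    (hmin : ∀ f g y, u (f ⊓ g) y = min (u f y) (u g y)) (y : Y) :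
    IsPreconnected (multiRetraction u y) := by
  by_cases hy : ∀ g, u g y ≤ 1
  · simpa [multiRetraction_eq_univ hy] using isPreconnected_univ
  push Not at hy
  obtain ⟨g, hg⟩ := hy
  rw [isPreconnected_iff_subset_of_fully_disjoint_closed (isClosed_multiRetraction u y)]
  intro A B hA hB hAB hdisj
  by_contra! hcon
  obtain ⟨⟨a, ha, haA⟩, ⟨b, hb, hbB⟩⟩ := And.imp not_subset.1 not_subset.1 hcon
  obtain ⟨q, hqA, hqB, -⟩ := exists_continuous_zero_one_of_isClosed hA hB hdisj
  -- `h₁` vanishes on `B`, `h₂` on `A`, and `h₁ + h₂ = 2 ‖g‖`, so `g ≤ h₁ ⊔ h₂`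
  set h₁ : X →ᵇ ℝ := (2 * ‖g‖) • (1 - mkOfCompact q)
  set h₂ : X →ᵇ ℝ := (2 * ‖g‖) • mkOfCompact q
  have hle : g ≤ h₁ ⊔ h₂ := by
    intro x
    change g x ≤ (h₁ ⊔ h₂) x
    have := g.apply_le_norm x
    simp only [h₁, h₂, coe_sup, Pi.sup_apply, coe_smul, coe_sub, coe_one, Pi.sub_apply,
      Pi.one_apply, mkOfCompact_apply, smul_eq_mul]
    rcases le_total (q x) 2⁻¹ with hq | hq
    · exact le_sup_of_le_left (by nlinarith [norm_nonneg g])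
    · exact le_sup_of_le_right (by nlinarith [norm_nonneg g])
  have hsplit : 1 < max (u h₁ y) (u h₂ y) :=
    hmax h₁ h₂ y ▸ hg.trans_le (monotone_of_map_inf hmin hle y)
  rcases lt_max_iff.1 hsplit with h | h
  · have := ha h₁ h
    norm_num [h₁, hqB ((hAB ha).resolve_left haA)] at this
  · have := hb h₂ h
    norm_num [h₂, hqA ((hAB hb).resolve_right hbB)] at this

theorem exists_usc_multiRetraction [ConnectedSpace X] [TopologicalSpace Y]
    {e : X → Y} (hopen : ∀ f, IsOpen {y | 1 < u f y})
    (hext : ∀ f x, u f (e x) = f x) (hone : ∀ y, u 1 y = 1)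
    (hmax : ∀ f g y, u (f ⊔ g) y = max (u f y) (u g y))
    (hmin : ∀ f g y, u (f ⊓ g) y = min (u f y) (u g y)) :
    ∃ r : Y → Set X,
      (∀ y, (r y).Nonempty ∧ IsCompact (r y) ∧ IsConnected (r y)) ∧
      (∀ U : Set X, IsOpen U → IsOpen {y | r y ⊆ U}) ∧
      (∀ x : X, r (e x) = {x}) :=
  ⟨multiRetraction u,
    fun y => ⟨multiRetraction_nonempty hone hmin y, (isClosed_multiRetraction u y).isCompact,
      multiRetraction_nonempty hone hmin y, isPreconnected_multiRetraction hmax hmin y⟩,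
    fun _ hU => isOpen_setOf_multiRetraction_subset hopen hU,
    multiRetraction_apply_eq_singleton hext⟩

end Compact

end LatticeExtender

open LatticeExtender

/-- let `X ⊆ Y` be a nonempty compact connected subspace. If there is an
extender `u : C*(X) → C*_lsc(Y)` with `u 1 = 1` preserving both max and min, or an extender
`u : C*(X) → C*_usc(Y)` with `u 1 = 1` preserving both max and min, then there is an upper
semicontinuous map `r : Y → X` with nonempty compact connected values and `r x = {x}` for
all `x ∈ X`. -/
theorem statement19 {Y : Type*} [TopologicalSpace Y] [T35Space Y] (X : Set Y)
    (hXcp : IsCompact X) (hXcn : IsConnected X)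
    (hu : (∃ u : BoundedContinuousFunction X ℝ → Y → ℝ,
        (∀ f, LowerSemicontinuous (u f)) ∧
        (∀ f, ∃ M : ℝ, ∀ y, |u f y| ≤ M) ∧
        (∀ (f : BoundedContinuousFunction X ℝ) (x : X), u f x = f x) ∧
        (∀ y, u 1 y = 1) ∧
        (∀ (f g : BoundedContinuousFunction X ℝ) (y : Y),
          u (f ⊔ g) y = max (u f y) (u g y)) ∧
        (∀ (f g : BoundedContinuousFunction X ℝ) (y : Y),
          u (f ⊓ g) y = min (u f y) (u g y))) ∨
      (∃ u : BoundedContinuousFunction X ℝ → Y → ℝ,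
        (∀ f, UpperSemicontinuous (u f)) ∧
        (∀ f, ∃ M : ℝ, ∀ y, |u f y| ≤ M) ∧
        (∀ (f : BoundedContinuousFunction X ℝ) (x : X), u f x = f x) ∧
        (∀ y, u 1 y = 1) ∧
        (∀ (f g : BoundedContinuousFunction X ℝ) (y : Y),
          u (f ⊔ g) y = max (u f y) (u g y)) ∧
        (∀ (f g : BoundedContinuousFunction X ℝ) (y : Y),
          u (f ⊓ g) y = min (u f y) (u g y)))) :
    ∃ r : Y → Set X,
      (∀ y, (r y).Nonempty ∧ IsCompact (r y) ∧ IsConnected (r y)) ∧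
      (∀ U : Set X, IsOpen U → IsOpen {y | r y ⊆ U}) ∧
      (∀ x : X, r x = {x}) := by
  have : CompactSpace X := isCompact_iff_compactSpace.1 hXcp
  have : ConnectedSpace X := Subtype.connectedSpace hXcn
  rcases hu with ⟨u, hlsc, -, hext, hone, hmax, hmin⟩ | ⟨u, husc, -, hext, hone, hmax, hmin⟩
  · exact exists_usc_multiRetraction (fun f => (hlsc f).isOpen_preimage 1) hext hone hmax hmin
  · exact exists_usc_multiRetraction (isOpen_setOf_one_lt_reflectAboutOne husc)
      (reflectAboutOne_extends hext) (reflectAboutOne_one hone) (reflectAboutOne_sup hmin)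
      (reflectAboutOne_inf hmax)
end
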